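/- arXiv:2006.04778 — 2 statements merged into one kernel-verified Lean document; each statement's English description precedes it below -/
import Mathlib

section
/- Let f : X → {0,1} be any fixed classifier, ε ∈ (0, 0.5), λ ∈ (0, 0.5) with min_{i∈{0,1}} Pr_D[f=1, Z=i] ≥ λ/2, and set ε' := ε·(1−η_0−η_1)·λ/20. With probability at least 1 − 4·exp(−(ε')²N/6) over the flipping noise, all four of the following inclusions hold: (1−η_1)·Pr[f=1,Ẑ=0] − η_1·Pr[f=1,Ẑ=1] ∈ (1−η_0−η_1)·Pr_D[f=1,Z=0] ± ε'; (1−η_0)·Pr[f=1,Ẑ=1] − η_0·Pr[f=1,Ẑ=0] ∈ (1−η_0−η_1)·Pr_D[f=1,Z=1] ± ε'; (1−η_1)·μ̂_0 − η_1·μ̂_1 ∈ (1−η_0−η_1)·μ_0 ± ε'; (1−η_0)·μ̂_1 − η_0·μ̂_0 ∈ (1−η_0−η_1)·μ_1 ± ε'. -/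
open scoped Classical

noncomputable section

/-- Empirical frequency of a predicate over `N` samples. -/
def empFreq (N : ℕ) (P : Fin N → Prop) : ℝ :=
  ((Finset.univ.filter P).card : ℝ) / N

/-- Probability, over independent flipping noise with rates `η0, η1`, of an event on the
noisy binary protected attributes. -/
def noiseProb (N : ℕ) (z : Fin N → Bool) (η0 η1 : ℝ)
    (E : (Fin N → Bool) → Prop) : ℝ :=
  ∑ zh : Fin N → Bool,
    if E zh then
      ∏ a, (if zh a = z a then 1 - cond (z a) η1 η0 else cond (z a) η1 η0)
    else 0

/-- `Pr[f = 1, Z' = i]` for the attribute assignment `z'` (true or noisy). -/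
def prJoint {X : Type} (N : ℕ) (x : Fin N → X) (f : X → Bool)
    (z' : Fin N → Bool) (i : Bool) : ℝ :=
  empFreq N (fun a => f (x a) = true ∧ z' a = i)

/-- `Pr[Z' = i]` for the attribute assignment `z'`. -/
def muOf (N : ℕ) (z' : Fin N → Bool) (i : Bool) : ℝ :=
  empFreq N (fun a => z' a = i)

/-! ### Auxiliary lemmas -/

open Finset

lemma exp_le_quad {x : ℝ} (h : |x| ≤ 1) : Real.exp x ≤ 1 + x + x ^ 2 := by
  have h2 := Real.exp_bound h (n := 2) (by norm_num)
  have h3 : ∑ m ∈ range 2, x ^ m / m.factorial = 1 + x := by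
    simp [Finset.sum_range_succ]
  rw [h3] at h2
  have h4 := (abs_sub_le_iff.1 h2).1
  have h5 : |x| ^ 2 = x ^ 2 := sq_abs x
  rw [h5] at h4
  norm_num [Nat.factorial] at h4
  nlinarith [sq_nonneg x]

lemma sq_le_one_of_abs_le {g : ℝ} (h : |g| ≤ 1) : g ^ 2 ≤ 1 := by
  have := abs_le.1 h
  nlinarith [this.1, this.2]

lemma mgf_bound (w0 w1 g0 g1 t : ℝ) (hw0 : 0 ≤ w0) (hw1 : 0 ≤ w1) (hsum : w0 + w1 = 1)
    (hmean : w0 * g0 + w1 * g1 = 0) (hb0 : |g0| ≤ 1) (hb1 : |g1| ≤ 1)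
    (ht : |t| ≤ 1) :
    w0 * Real.exp (t * g0) + w1 * Real.exp (t * g1) ≤ Real.exp (t ^ 2) := by
  have e0 : Real.exp (t * g0) ≤ 1 + t * g0 + t ^ 2 := by
    have hb : |t * g0| ≤ 1 := by
      rw [abs_mul]; exact mul_le_one₀ ht (abs_nonneg _) hb0
    refine (exp_le_quad hb).trans ?_
    have h1 : (t * g0) ^ 2 = t ^ 2 * g0 ^ 2 := by ring
    have h2 : t ^ 2 * g0 ^ 2 ≤ t ^ 2 * 1 :=
      mul_le_mul_of_nonneg_left (sq_le_one_of_abs_le hb0) (sq_nonneg t)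
    linarith
  have e1 : Real.exp (t * g1) ≤ 1 + t * g1 + t ^ 2 := by
    have hb : |t * g1| ≤ 1 := by
      rw [abs_mul]; exact mul_le_one₀ ht (abs_nonneg _) hb1
    refine (exp_le_quad hb).trans ?_
    have h1 : (t * g1) ^ 2 = t ^ 2 * g1 ^ 2 := by ring
    have h2 : t ^ 2 * g1 ^ 2 ≤ t ^ 2 * 1 :=
      mul_le_mul_of_nonneg_left (sq_le_one_of_abs_le hb1) (sq_nonneg t)
    linarith
  have hexp : w0 * (1 + t * g0 + t ^ 2) + w1 * (1 + t * g1 + t ^ 2) = 1 + t ^ 2 := by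
    linear_combination (1 + t ^ 2) * hsum + t * hmean
  have key : w0 * Real.exp (t * g0) + w1 * Real.exp (t * g1) ≤ 1 + t ^ 2 := by
    have := mul_le_mul_of_nonneg_left e0 hw0
    have := mul_le_mul_of_nonneg_left e1 hw1
    linarith
  exact key.trans (by linarith [Real.add_one_le_exp (t ^ 2)])

lemma chernoff_one {N : ℕ} (w g : Fin N → Bool → ℝ)
    (hw0 : ∀ a b, 0 ≤ w a b) (hw1 : ∀ a, w a false + w a true = 1)
    (hmean : ∀ a, w a false * g a false + w a true * g a true = 0)
    (hbd : ∀ a b, |g a b| ≤ 1)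
    (t c : ℝ) (ht0 : 0 ≤ t) (ht1 : t ≤ 1) :
    (∑ zh : Fin N → Bool, if c ≤ ∑ a, g a (zh a) then ∏ a, w a (zh a) else 0)
      ≤ Real.exp (t ^ 2 * N - t * c) := by
  have key : ∀ zh : Fin N → Bool, (if c ≤ ∑ a, g a (zh a) then ∏ a, w a (zh a) else 0)
      ≤ Real.exp (-(t * c)) * ∏ a, (w a (zh a) * Real.exp (t * g a (zh a))) := by
    intro zh
    have hWnn : (0:ℝ) ≤ ∏ a, w a (zh a) := Finset.prod_nonneg fun a _ => hw0 a _
    rw [Finset.prod_mul_distrib, ← Real.exp_sum]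
    split_ifs with h
    · have h1 : (1:ℝ) ≤ Real.exp (-(t * c)) * Real.exp (∑ a, t * g a (zh a)) := by
        rw [← Real.exp_add]
        have : 0 ≤ -(t * c) + ∑ a, t * g a (zh a) := by
          have : t * c ≤ t * ∑ a, g a (zh a) := mul_le_mul_of_nonneg_left h ht0
          rw [← Finset.mul_sum]
          linarith
        linarith [Real.add_one_le_exp (-(t * c) + ∑ a, t * g a (zh a))]
      calc ∏ a, w a (zh a) = 1 * ∏ a, w a (zh a) := by ring
        _ ≤ (Real.exp (-(t * c)) * Real.exp (∑ a, t * g a (zh a))) * ∏ a, w a (zh a) :=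
            mul_le_mul_of_nonneg_right h1 hWnn
        _ = Real.exp (-(t * c)) * ((∏ a, w a (zh a)) * Real.exp (∑ a, t * g a (zh a))) := by ring
    · positivity
  calc (∑ zh : Fin N → Bool, if c ≤ ∑ a, g a (zh a) then ∏ a, w a (zh a) else 0)
      ≤ ∑ zh : Fin N → Bool,
          Real.exp (-(t * c)) * ∏ a, (w a (zh a) * Real.exp (t * g a (zh a))) :=
        Finset.sum_le_sum fun zh _ => key zh
    _ = Real.exp (-(t * c)) * ∑ zh : Fin N → Bool,
          ∏ a, (w a (zh a) * Real.exp (t * g a (zh a))) := by rw [Finset.mul_sum]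
    _ = Real.exp (-(t * c)) * ∏ a, ∑ b : Bool, w a b * Real.exp (t * g a b) := by
        rw [Fintype.prod_sum]
    _ ≤ Real.exp (-(t * c)) * ∏ a : Fin N, Real.exp (t ^ 2) := by
        refine mul_le_mul_of_nonneg_left ?_ (Real.exp_nonneg _)
        refine Finset.prod_le_prod (fun a _ => ?_) (fun a _ => ?_)
        · have : ∑ b : Bool, w a b * Real.exp (t * g a b)
              = w a false * Real.exp (t * g a false) + w a true * Real.exp (t * g a true) := by
            simp [Fintype.sum_bool]; ring
          rw [this]
          exact add_nonneg (mul_nonneg (hw0 a false) (Real.exp_nonneg _))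
            (mul_nonneg (hw0 a true) (Real.exp_nonneg _))
        · have : ∑ b : Bool, w a b * Real.exp (t * g a b)
              = w a false * Real.exp (t * g a false) + w a true * Real.exp (t * g a true) := by
            simp [Fintype.sum_bool]; ring
          rw [this]
          exact mgf_bound _ _ _ _ _ (hw0 a false) (hw0 a true) (hw1 a) (hmean a)
            (hbd a false) (hbd a true) (abs_le.2 ⟨by linarith, ht1⟩)
    _ = Real.exp (t ^ 2 * N - t * c) := by
        rw [Finset.prod_const, card_univ, Fintype.card_fin, ← Real.exp_nat_mul, ← Real.exp_add]
        ring_nf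

lemma chernoff_abs {N : ℕ} (w g : Fin N → Bool → ℝ)
    (hw0 : ∀ a b, 0 ≤ w a b) (hw1 : ∀ a, w a false + w a true = 1)
    (hmean : ∀ a, w a false * g a false + w a true * g a true = 0)
    (hbd : ∀ a b, |g a b| ≤ 1)
    (ε' : ℝ) (hε0 : 0 < ε') (hε2 : ε' ≤ 2) :
    (∑ zh : Fin N → Bool, if ¬ |∑ a, g a (zh a)| ≤ ε' * N then ∏ a, w a (zh a) else 0)
      ≤ 2 * Real.exp (-(ε' ^ 2 * N / 4)) := by
  set t : ℝ := ε' / 2 with ht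
  have ht0 : 0 ≤ t := by positivity
  have ht1 : t ≤ 1 := by rw [ht]; linarith
  have hA := chernoff_one w g hw0 hw1 hmean hbd t (ε' * N) ht0 ht1
  have hB := chernoff_one w (fun a b => -(g a b)) hw0 hw1
      (fun a => by have := hmean a; ring_nf; linarith)
      (fun a b => by simpa using hbd a b) t (ε' * N) ht0 ht1
  have hexp : t ^ 2 * N - t * (ε' * N) = -(ε' ^ 2 * N / 4) := by rw [ht]; ring
  rw [hexp] at hA hB
  have hpt : ∀ zh : Fin N → Bool,
      (if ¬ |∑ a, g a (zh a)| ≤ ε' * N then ∏ a, w a (zh a) else 0)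
        ≤ (if ε' * N ≤ ∑ a, g a (zh a) then ∏ a, w a (zh a) else 0)
          + (if ε' * N ≤ ∑ a, -(g a (zh a)) then ∏ a, w a (zh a) else 0) := by
    intro zh
    have hW : (0:ℝ) ≤ ∏ a, w a (zh a) := Finset.prod_nonneg fun a _ => hw0 a _
    by_cases h : |∑ a, g a (zh a)| ≤ ε' * N
    · simp only [h, not_true_eq_false, if_false]
      split_ifs <;> linarith
    · have h' : ε' * N < |∑ a, g a (zh a)| := lt_of_not_ge h
      rcases lt_abs.1 h' with h1 | h1
      · simp only [h, not_false_eq_true, if_true]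
        rw [if_pos h1.le]
        split_ifs <;> linarith
      · have h2 : ε' * N ≤ ∑ a, -(g a (zh a)) := by
          rw [Finset.sum_neg_distrib]; linarith
        simp only [h, not_false_eq_true, if_true]
        rw [if_pos h2]
        split_ifs <;> linarith
  calc (∑ zh : Fin N → Bool, if ¬ |∑ a, g a (zh a)| ≤ ε' * N then ∏ a, w a (zh a) else 0)
      ≤ ∑ zh : Fin N → Bool,
          ((if ε' * N ≤ ∑ a, g a (zh a) then ∏ a, w a (zh a) else 0)
            + (if ε' * N ≤ ∑ a, -(g a (zh a)) then ∏ a, w a (zh a) else 0)) :=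
        Finset.sum_le_sum fun zh _ => hpt zh
    _ = (∑ zh : Fin N → Bool, if ε' * N ≤ ∑ a, g a (zh a) then ∏ a, w a (zh a) else 0)
        + ∑ zh : Fin N → Bool, if ε' * N ≤ ∑ a, -(g a (zh a)) then ∏ a, w a (zh a) else 0 :=
        Finset.sum_add_distrib
    _ ≤ 2 * Real.exp (-(ε' ^ 2 * N / 4)) := by linarith

/-- Per-sample flipping weights. -/
def wfun {N : ℕ} (z : Fin N → Bool) (η0 η1 : ℝ) : Fin N → Bool → ℝ :=
  fun a b => if b = z a then 1 - cond (z a) η1 η0 else cond (z a) η1 η0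

lemma empFreq_eq_sum (N : ℕ) (P : Fin N → Prop) :
    empFreq N P = (∑ a, if P a then (1:ℝ) else 0) / N := by
  unfold empFreq
  rw [Finset.card_filter]
  congr 1
  push_cast
  exact Finset.sum_congr rfl fun a _ => by split_ifs <;> norm_num

lemma wfun_nonneg {N : ℕ} (z : Fin N → Bool) {η0 η1 : ℝ}
    (hη0 : 0 < η0 ∧ η0 < 1/2) (hη1 : 0 < η1 ∧ η1 < 1/2) (a : Fin N) (b : Bool) :
    0 ≤ wfun z η0 η1 a b := by
  cases hz : z a <;> simp [wfun, hz] <;> split_ifs <;>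
    linarith [hη0.1, hη0.2, hη1.1, hη1.2]

lemma wfun_sum {N : ℕ} (z : Fin N → Bool) {η0 η1 : ℝ} (a : Fin N) :
    wfun z η0 η1 a false + wfun z η0 η1 a true = 1 := by
  cases hz : z a <;> simp [wfun, hz]

lemma event_conc_g_mean {N : ℕ} (z : Fin N → Bool) (η0 η1 : ℝ)
    (c : Fin N → Prop) (i : Bool) (a : Fin N) :
    wfun z η0 η1 a false *
        ((1 - cond i η0 η1) * (if c a ∧ false = i then (1:ℝ) else 0)
          - cond i η0 η1 * (if c a ∧ false = !i then (1:ℝ) else 0)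
          - (1 - η0 - η1) * (if c a ∧ z a = i then (1:ℝ) else 0))
      + wfun z η0 η1 a true *
        ((1 - cond i η0 η1) * (if c a ∧ true = i then (1:ℝ) else 0)
          - cond i η0 η1 * (if c a ∧ true = !i then (1:ℝ) else 0)
          - (1 - η0 - η1) * (if c a ∧ z a = i then (1:ℝ) else 0)) = 0 := by
  by_cases hc : c a <;> cases i <;> cases hz : z a <;>
    simp [wfun, hz, hc] <;> ring

lemma event_conc_g_bd {N : ℕ} (z : Fin N → Bool) {η0 η1 : ℝ}
    (hη0 : 0 < η0 ∧ η0 < 1/2) (hη1 : 0 < η1 ∧ η1 < 1/2)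
    (c : Fin N → Prop) (i : Bool) (a : Fin N) (b : Bool) :
    |(1 - cond i η0 η1) * (if c a ∧ b = i then (1:ℝ) else 0)
      - cond i η0 η1 * (if c a ∧ b = !i then (1:ℝ) else 0)
      - (1 - η0 - η1) * (if c a ∧ z a = i then (1:ℝ) else 0)| ≤ 1 := by
  obtain ⟨h1, h2⟩ := hη0
  obtain ⟨h3, h4⟩ := hη1
  by_cases hc : c a <;> cases i <;> cases b <;> by_cases hz : z a = false <;>
    simp [hc, hz] <;> rw [abs_le] <;> constructor <;> linarith

lemma event_conc {N : ℕ} (hN : 1 ≤ N) (z : Fin N → Bool) {η0 η1 : ℝ}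
    (hη0 : 0 < η0 ∧ η0 < 1/2) (hη1 : 0 < η1 ∧ η1 < 1/2)
    (c : Fin N → Prop) (i : Bool) (ε' : ℝ) (hε0 : 0 < ε') (hε2 : ε' ≤ 2) :
    (∑ zh : Fin N → Bool,
      if ¬ ((1 - cond i η0 η1) * empFreq N (fun a => c a ∧ zh a = i)
            - cond i η0 η1 * empFreq N (fun a => c a ∧ zh a = !i)
          ∈ Set.Icc ((1 - η0 - η1) * empFreq N (fun a => c a ∧ z a = i) - ε')
              ((1 - η0 - η1) * empFreq N (fun a => c a ∧ z a = i) + ε'))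
      then ∏ a, wfun z η0 η1 a (zh a) else 0)
    ≤ 2 * Real.exp (-(ε' ^ 2 * N / 4)) := by
  have hNpos : (0:ℝ) < N := by exact_mod_cast hN
  set g : Fin N → Bool → ℝ := fun a b =>
    (1 - cond i η0 η1) * (if c a ∧ b = i then (1:ℝ) else 0)
      - cond i η0 η1 * (if c a ∧ b = !i then (1:ℝ) else 0)
      - (1 - η0 - η1) * (if c a ∧ z a = i then (1:ℝ) else 0) with hg
  have hgsum : ∀ zh : Fin N → Bool, ∑ a, g a (zh a)
      = N * ((1 - cond i η0 η1) * empFreq N (fun a => c a ∧ zh a = i)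
            - cond i η0 η1 * empFreq N (fun a => c a ∧ zh a = !i)
            - (1 - η0 - η1) * empFreq N (fun a => c a ∧ z a = i)) := by
    intro zh
    have hN0 : (N:ℝ) ≠ 0 := ne_of_gt hNpos
    have e : ∀ P : Fin N → Prop, (N:ℝ) * empFreq N P = ∑ x : Fin N, if P x then (1:ℝ) else 0 := by
      intro P; rw [empFreq_eq_sum]; field_simp
    have expand : (N:ℝ) * ((1 - cond i η0 η1) * empFreq N (fun a => c a ∧ zh a = i)
            - cond i η0 η1 * empFreq N (fun a => c a ∧ zh a = !i)
            - (1 - η0 - η1) * empFreq N (fun a => c a ∧ z a = i))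
        = (1 - cond i η0 η1) * ((N:ℝ) * empFreq N (fun a => c a ∧ zh a = i))
          - cond i η0 η1 * ((N:ℝ) * empFreq N (fun a => c a ∧ zh a = !i))
          - (1 - η0 - η1) * ((N:ℝ) * empFreq N (fun a => c a ∧ z a = i)) := by ring
    rw [expand, e, e, e, hg]
    simp only [Finset.sum_sub_distrib, ← Finset.mul_sum]
    congr!
  have hiff : ∀ zh : Fin N → Bool,
      ¬ ((1 - cond i η0 η1) * empFreq N (fun a => c a ∧ zh a = i)
            - cond i η0 η1 * empFreq N (fun a => c a ∧ zh a = !i)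
          ∈ Set.Icc ((1 - η0 - η1) * empFreq N (fun a => c a ∧ z a = i) - ε')
              ((1 - η0 - η1) * empFreq N (fun a => c a ∧ z a = i) + ε'))
        ↔ ¬ |∑ a, g a (zh a)| ≤ ε' * N := by
    intro zh
    rw [Set.mem_Icc, hgsum zh, abs_le]
    constructor
    · intro h h'
      exact h ⟨by nlinarith [h'.1], by nlinarith [h'.2]⟩
    · intro h h'
      exact h ⟨by nlinarith [h'.1], by nlinarith [h'.2]⟩
  calc (∑ zh : Fin N → Bool,
      if ¬ ((1 - cond i η0 η1) * empFreq N (fun a => c a ∧ zh a = i)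
            - cond i η0 η1 * empFreq N (fun a => c a ∧ zh a = !i)
          ∈ Set.Icc ((1 - η0 - η1) * empFreq N (fun a => c a ∧ z a = i) - ε')
              ((1 - η0 - η1) * empFreq N (fun a => c a ∧ z a = i) + ε'))
      then ∏ a, wfun z η0 η1 a (zh a) else 0)
      = ∑ zh : Fin N → Bool,
          if ¬ |∑ a, g a (zh a)| ≤ ε' * N then ∏ a, wfun z η0 η1 a (zh a) else 0 :=
        Finset.sum_congr rfl fun zh _ => if_congr (hiff zh) rfl rfl
    _ ≤ 2 * Real.exp (-(ε' ^ 2 * N / 4)) :=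
        chernoff_abs (wfun z η0 η1) g (wfun_nonneg z hη0 hη1) (wfun_sum z)
          (fun a => event_conc_g_mean z η0 η1 c i a)
          (fun a b => event_conc_g_bd z hη0 hη1 c i a b) ε' hε0 hε2

lemma sum_wprod {N : ℕ} (w : Fin N → Bool → ℝ) (hw1 : ∀ a, w a false + w a true = 1) :
    ∑ zh : Fin N → Bool, ∏ a, w a (zh a) = 1 := by
  rw [← Fintype.prod_sum]
  rw [Finset.prod_eq_one]
  intro a _
  rw [Fintype.sum_bool]
  linarith [hw1 a]

lemma union4 {N : ℕ} (P : (Fin N → Bool) → ℝ) (hP : ∀ zh, 0 ≤ P zh)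
    (hmass : ∑ zh : Fin N → Bool, P zh = 1)
    (E1 E2 E3 E4 : (Fin N → Bool) → Prop) (B : ℝ)
    (h1 : (∑ zh : Fin N → Bool, if ¬ E1 zh then P zh else 0) ≤ B)
    (h2 : (∑ zh : Fin N → Bool, if ¬ E2 zh then P zh else 0) ≤ B)
    (h3 : (∑ zh : Fin N → Bool, if ¬ E3 zh then P zh else 0) ≤ B)
    (h4 : (∑ zh : Fin N → Bool, if ¬ E4 zh then P zh else 0) ≤ B) :
    1 - 4 * B ≤ ∑ zh : Fin N → Bool,
      if E1 zh ∧ E2 zh ∧ E3 zh ∧ E4 zh then P zh else 0 := by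
  have hsplit : (∑ zh : Fin N → Bool, if E1 zh ∧ E2 zh ∧ E3 zh ∧ E4 zh then P zh else 0)
      + (∑ zh : Fin N → Bool, if ¬ (E1 zh ∧ E2 zh ∧ E3 zh ∧ E4 zh) then P zh else 0) = 1 := by
    rw [← Finset.sum_add_distrib, ← hmass]
    refine Finset.sum_congr rfl fun zh _ => ?_
    by_cases h : E1 zh ∧ E2 zh ∧ E3 zh ∧ E4 zh <;> simp [h]
  have hpt : ∀ zh : Fin N → Bool,
      (if ¬ (E1 zh ∧ E2 zh ∧ E3 zh ∧ E4 zh) then P zh else 0)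
        ≤ (if ¬ E1 zh then P zh else 0) + (if ¬ E2 zh then P zh else 0)
          + (if ¬ E3 zh then P zh else 0) + (if ¬ E4 zh then P zh else 0) := by
    intro zh
    by_cases a1 : E1 zh <;> by_cases a2 : E2 zh <;> by_cases a3 : E3 zh <;>
      by_cases a4 : E4 zh <;> simp [a1, a2, a3, a4] <;> linarith [hP zh]
  have hsub : (∑ zh : Fin N → Bool, if ¬ (E1 zh ∧ E2 zh ∧ E3 zh ∧ E4 zh) then P zh else 0)
      ≤ B + B + B + B := by
    calc (∑ zh : Fin N → Bool, if ¬ (E1 zh ∧ E2 zh ∧ E3 zh ∧ E4 zh) then P zh else 0)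
        ≤ ∑ zh : Fin N → Bool,
            ((if ¬ E1 zh then P zh else 0) + (if ¬ E2 zh then P zh else 0)
              + (if ¬ E3 zh then P zh else 0) + (if ¬ E4 zh then P zh else 0)) :=
          Finset.sum_le_sum fun zh _ => hpt zh
      _ = (∑ zh : Fin N → Bool, if ¬ E1 zh then P zh else 0)
          + (∑ zh : Fin N → Bool, if ¬ E2 zh then P zh else 0)
          + (∑ zh : Fin N → Bool, if ¬ E3 zh then P zh else 0)
          + (∑ zh : Fin N → Bool, if ¬ E4 zh then P zh else 0) := by
          rw [Finset.sum_add_distrib, Finset.sum_add_distrib, Finset.sum_add_distrib]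
      _ ≤ B + B + B + B := by linarith
  linarith

lemma final_numeric (s p : ℝ) (hp : 0 ≤ p)
    (h : 1 - 8 * Real.exp (-(6 * s / 4)) ≤ p) :
    1 - 4 * Real.exp (-s) ≤ p := by
  set e : ℝ := Real.exp (-(s / 2)) with he
  have he0 : 0 < e := Real.exp_pos _
  have h2 : Real.exp (-s) = e ^ 2 := by
    rw [he, ← Real.exp_nat_mul]; congr 1; push_cast; ring
  have h3 : Real.exp (-(6 * s / 4)) = e ^ 3 := by
    rw [he, ← Real.exp_nat_mul]; congr 1; push_cast; ring
  rw [h2]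
  rw [h3] at h
  by_cases hc : 4 * e ^ 2 ≥ 1
  · linarith
  · push_neg at hc
    have he12 : e ≤ 1 / 2 := by nlinarith [sq_nonneg (2 * e - 1)]
    nlinarith [sq_nonneg e]

set_option maxHeartbeats 1600000 in
/-- Concentration of the four denoised linear combinations, with accuracy
`ε' = ε(1−η0−η1)λ/20`, each within `± ε'` of the corresponding underlying quantity. -/
theorem stmt_4 {X : Type} (N : ℕ) (hN : 1 ≤ N)
    (x : Fin N → X) (z : Fin N → Bool) (y : Fin N → Bool)
    (η0 η1 : ℝ) (hη0 : 0 < η0 ∧ η0 < 1/2) (hη1 : 0 < η1 ∧ η1 < 1/2)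
    (f : X → Bool) (ε : ℝ) (hε : 0 < ε ∧ ε < 1/2) (lam : ℝ) (hlam : 0 < lam ∧ lam < 1/2)
    (hmin : lam / 2 ≤ min (prJoint N x f z false) (prJoint N x f z true)) :
    1 - 4 * Real.exp (-(ε * (1 - η0 - η1) * lam / 20) ^ 2 * N / 6) ≤
      noiseProb N z η0 η1 (fun zh =>
        ((1 - η1) * prJoint N x f zh false - η1 * prJoint N x f zh true
            ∈ Set.Icc ((1 - η0 - η1) * prJoint N x f z false - ε * (1 - η0 - η1) * lam / 20)
                ((1 - η0 - η1) * prJoint N x f z false + ε * (1 - η0 - η1) * lam / 20)) ∧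
        ((1 - η0) * prJoint N x f zh true - η0 * prJoint N x f zh false
            ∈ Set.Icc ((1 - η0 - η1) * prJoint N x f z true - ε * (1 - η0 - η1) * lam / 20)
                ((1 - η0 - η1) * prJoint N x f z true + ε * (1 - η0 - η1) * lam / 20)) ∧
        ((1 - η1) * muOf N zh false - η1 * muOf N zh true
            ∈ Set.Icc ((1 - η0 - η1) * muOf N z false - ε * (1 - η0 - η1) * lam / 20)
                ((1 - η0 - η1) * muOf N z false + ε * (1 - η0 - η1) * lam / 20)) ∧
        ((1 - η0) * muOf N zh true - η0 * muOf N zh false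
            ∈ Set.Icc ((1 - η0 - η1) * muOf N z true - ε * (1 - η0 - η1) * lam / 20)
                ((1 - η0 - η1) * muOf N z true + ε * (1 - η0 - η1) * lam / 20))) := by
  have hηs : 0 < 1 - η0 - η1 := by linarith [hη0.2, hη1.2]
  set ε' : ℝ := ε * (1 - η0 - η1) * lam / 20 with hε'def
  have hε'0 : 0 < ε' := by
    have := mul_pos (mul_pos hε.1 hηs) hlam.1
    rw [hε'def]; linarith
  have hε'2 : ε' ≤ 2 := by
    have h1 : ε * (1 - η0 - η1) ≤ 1 := by nlinarith [hε.1, hε.2, hηs]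
    have h2 : ε * (1 - η0 - η1) * lam ≤ 1 := by
      nlinarith [mul_pos hε.1 hηs, hlam.1, hlam.2]
    rw [hε'def]; linarith
  have h1 := event_conc hN z hη0 hη1 (fun a => f (x a) = true) false ε' hε'0 hε'2
  have h2 := event_conc hN z hη0 hη1 (fun a => f (x a) = true) true ε' hε'0 hε'2
  have h3 := event_conc hN z hη0 hη1 (fun _ => True) false ε' hε'0 hε'2
  have h4 := event_conc hN z hη0 hη1 (fun _ => True) true ε' hε'0 hε'2
  simp only [Bool.not_false, Bool.not_true, Bool.cond_false, Bool.cond_true] at h1 h2 h3 h4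
  have hmu : ∀ (zh : Fin N → Bool) (i : Bool),
      empFreq N (fun a => True ∧ zh a = i) = muOf N zh i := by
    intro zh i
    have h : (fun a : Fin N => True ∧ zh a = i) = (fun a => zh a = i) := by
      funext a; simp
    rw [h]; rfl
  simp only [hmu] at h3 h4
  have iteIrrel : ∀ (p : Prop) (d1 d2 : Decidable p) (a b : ℝ),
      @ite ℝ p d1 a b = @ite ℝ p d2 a b := fun p d1 d2 a b => by
    rw [Subsingleton.elim d1 d2]
  have hU := union4 (fun zh => ∏ a, wfun z η0 η1 a (zh a))
      (fun zh => Finset.prod_nonneg fun a _ => wfun_nonneg z hη0 hη1 a (zh a))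
      (sum_wprod _ (wfun_sum z))
      (fun zh => (1 - η1) * prJoint N x f zh false - η1 * prJoint N x f zh true
          ∈ Set.Icc ((1 - η0 - η1) * prJoint N x f z false - ε')
              ((1 - η0 - η1) * prJoint N x f z false + ε'))
      (fun zh => (1 - η0) * prJoint N x f zh true - η0 * prJoint N x f zh false
          ∈ Set.Icc ((1 - η0 - η1) * prJoint N x f z true - ε')
              ((1 - η0 - η1) * prJoint N x f z true + ε'))
      (fun zh => (1 - η1) * muOf N zh false - η1 * muOf N zh true
          ∈ Set.Icc ((1 - η0 - η1) * muOf N z false - ε')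
              ((1 - η0 - η1) * muOf N z false + ε'))
      (fun zh => (1 - η0) * muOf N zh true - η0 * muOf N zh false
          ∈ Set.Icc ((1 - η0 - η1) * muOf N z true - ε')
              ((1 - η0 - η1) * muOf N z true + ε'))
      (2 * Real.exp (-(ε' ^ 2 * N / 4)))
      (le_of_eq_of_le (Finset.sum_congr rfl fun zh _ => iteIrrel _ _ _ _ _) h1)
      (le_of_eq_of_le (Finset.sum_congr rfl fun zh _ => iteIrrel _ _ _ _ _) h2)
      (le_of_eq_of_le (Finset.sum_congr rfl fun zh _ => iteIrrel _ _ _ _ _) h3)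
      (le_of_eq_of_le (Finset.sum_congr rfl fun zh _ => iteIrrel _ _ _ _ _) h4)
  have hexpshape : -ε' ^ 2 * (N:ℝ) / 6 = -(ε' ^ 2 * (N:ℝ) / 6) := by ring
  rw [hexpshape]
  have hnn : 0 ≤ noiseProb N z η0 η1 (fun zh =>
      ((1 - η1) * prJoint N x f zh false - η1 * prJoint N x f zh true
          ∈ Set.Icc ((1 - η0 - η1) * prJoint N x f z false - ε')
              ((1 - η0 - η1) * prJoint N x f z false + ε')) ∧
      ((1 - η0) * prJoint N x f zh true - η0 * prJoint N x f zh false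
          ∈ Set.Icc ((1 - η0 - η1) * prJoint N x f z true - ε')
              ((1 - η0 - η1) * prJoint N x f z true + ε')) ∧
      ((1 - η1) * muOf N zh false - η1 * muOf N zh true
          ∈ Set.Icc ((1 - η0 - η1) * muOf N z false - ε')
              ((1 - η0 - η1) * muOf N z false + ε')) ∧
      ((1 - η0) * muOf N zh true - η0 * muOf N zh false
          ∈ Set.Icc ((1 - η0 - η1) * muOf N z true - ε')
              ((1 - η0 - η1) * muOf N z true + ε'))) := by
    rw [noiseProb]
    refine Finset.sum_nonneg fun zh _ => ?_
    split_ifs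
    · exact Finset.prod_nonneg fun a _ => wfun_nonneg z hη0 hη1 a (zh a)
    · exact le_refl 0
  refine final_numeric (ε' ^ 2 * (N:ℝ) / 6) _ hnn ?_
  have hexpshape2 : -(6 * (ε' ^ 2 * (N:ℝ) / 6) / 4) = -(ε' ^ 2 * (N:ℝ) / 4) := by ring
  rw [hexpshape2]
  convert hU using 1
  · ring
  · rw [noiseProb]
    exact Finset.sum_congr rfl fun zh _ => iteIrrel _ _ _ _ _
end
end

section
/- Let λ ∈ (0, 0.5), τ ∈ [0,1], δ ∈ (0, 0.5), and let f★ : X → {0,1} be a classifier with γ(f★, S) ≥ τ and min_{i∈{0,1}} Pr_D[f★=1, Z=i] ≥ λ. Then with probability at least 1 − 2·exp(−δ²N/6) − 4·exp(−(1−η_0−η_1)²λ²δ²N/2400) over the flipping noise, f★ satisfies the denoised constraints with parameters (λ, δ, τ). -/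
open scoped Classical

noncomputable section

/-- `Pr[f = 1 ∣ Z' = i]`. -/
def rate {X : Type} (N : ℕ) (x : Fin N → X) (f : X → Bool)
    (z' : Fin N → Bool) (i : Bool) : ℝ :=
  prJoint N x f z' i / muOf N z' i

/-- Statistical rate `γ(f, ·)` with respect to attribute assignment `z'`. -/
def gammaSR {X : Type} (N : ℕ) (x : Fin N → X) (f : X → Bool)
    (z' : Fin N → Bool) : ℝ :=
  min (rate N x f z' false) (rate N x f z' true) /
    max (rate N x f z' false) (rate N x f z' true)

/-- Denoised rate `Γ_0(f)`. -/
def Gamma0 {X : Type} (N : ℕ) (x : Fin N → X) (η0 η1 : ℝ) (f : X → Bool)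
    (zh : Fin N → Bool) : ℝ :=
  ((1 - η1) * prJoint N x f zh false - η1 * prJoint N x f zh true) /
    ((1 - η1) * muOf N zh false - η1 * muOf N zh true)

/-- Denoised rate `Γ_1(f)`. -/
def Gamma1 {X : Type} (N : ℕ) (x : Fin N → X) (η0 η1 : ℝ) (f : X → Bool)
    (zh : Fin N → Bool) : ℝ :=
  ((1 - η0) * prJoint N x f zh true - η0 * prJoint N x f zh false) /
    ((1 - η0) * muOf N zh true - η0 * muOf N zh false)

/-- Denoised statistical rate `γ^Δ(f, Ŝ)`. -/
def gammaDelta {X : Type} (N : ℕ) (x : Fin N → X) (η0 η1 : ℝ) (f : X → Bool)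
    (zh : Fin N → Bool) : ℝ :=
  min (Gamma0 N x η0 η1 f zh / Gamma1 N x η0 η1 f zh)
    (Gamma1 N x η0 η1 f zh / Gamma0 N x η0 η1 f zh)

/-- A classifier `f` satisfies the denoised constraints with parameters `(λ, δ, τ)` for the
realized noisy attributes `zh`. -/
def satDenoised {X : Type} (N : ℕ) (x : Fin N → X) (η0 η1 lam δ τ : ℝ)
    (f : X → Bool) (zh : Fin N → Bool) : Prop :=
  ((1 - η0 - η1) * lam - δ ≤
      (1 - η1) * prJoint N x f zh false - η1 * prJoint N x f zh true) ∧
  ((1 - η0 - η1) * lam - δ ≤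
      (1 - η0) * prJoint N x f zh true - η0 * prJoint N x f zh false) ∧
  (τ - δ ≤ gammaDelta N x η0 η1 f zh)

/-!
Under the flipping noise the expectation of `Pr[f=1, Ẑ=0]` is
`(1-η0) Pr_D[f=1, Z=0] + η1 Pr_D[f=1, Z=1]`, and likewise for `μ̂_0`. Since
`Pr[f=1, Ẑ=0] + Pr[f=1, Ẑ=1] = Pr_D[f=1]` and `μ̂_0 + μ̂_1 = μ_0 + μ_1`, every numerator and
denominator of the denoised rates equals `(1-η0-η1)` times its noiseless counterpart, plus or
minus one of these two deviations from the mean. Hoeffding's inequality for the product law of the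
noisy attributes bounds both deviations by `ε = (1-η0-η1) λ δ / 4` except with probability
`4 exp (-N ε² / 2)`. As `λ ≤ Pr_D[f=1, Z=i] ≤ μ_i`, these are relative errors of at most `δ / 4`,
so the denoised constraints hold with margin `δ`, and the ratio `Γ_0 / Γ_1` is at least
`γ(f★, S) ((1 - δ/4) / (1 + δ/4))² ≥ τ - δ`.
-/

open Finset Real

theorem Real.sum_mul_exp_le_exp_sq_div_two {β : Type*} [Fintype β] {w v : β → ℝ}
    (hw : ∀ b, 0 ≤ w b) (hw₁ : ∑ b, w b = 1) (hv : ∀ b, |v b| ≤ 1)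
    (hmean : ∑ b, w b * v b = 0) (s : ℝ) :
    ∑ b, w b * exp (v b * s) ≤ exp (s ^ 2 / 2) :=
  calc ∑ b, w b * exp (v b * s) ≤ ∑ b, w b * (cosh s + v b * sinh s) :=
        sum_le_sum fun b _ =>
          mul_le_mul_of_nonneg_left (exp_mul_le_cosh_add_mul_sinh (hv b) s) (hw b)
    _ = cosh s := by
        simp only [mul_add, sum_add_distrib, ← sum_mul, ← mul_assoc, hw₁, hmean]; ring
    _ ≤ exp (s ^ 2 / 2) := cosh_le_exp_half_sq s

section ProductProb

variable {ι β : Type*} [Fintype ι] [DecidableEq ι] [Fintype β]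

def productProb (w : ι → β → ℝ) (E : (ι → β) → Prop) : ℝ :=
  ∑ ω : ι → β, if E ω then ∏ i, w i (ω i) else 0

variable {w : ι → β → ℝ}

theorem sum_prod_eq_one (hw₁ : ∀ i, ∑ b, w i b = 1) : ∑ ω : ι → β, ∏ i, w i (ω i) = 1 := by
  simp [← Fintype.prod_sum, hw₁]

theorem productProb_not (hw₁ : ∀ i, ∑ b, w i b = 1) (E : (ι → β) → Prop) :
    productProb w (fun ω => ¬ E ω) = 1 - productProb w E := by
  rw [eq_sub_iff_add_eq, productProb, productProb, ← sum_add_distrib, ← sum_prod_eq_one hw₁]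
  refine sum_congr rfl fun ω _ => ?_
  by_cases h : E ω <;> simp [h]

theorem sum_prod_mul_exp_sum (h : ι → β → ℝ) :
    ∑ ω : ι → β, (∏ i, w i (ω i)) * exp (∑ i, h i (ω i)) = ∏ i, ∑ b, w i b * exp (h i b) := by
  simp only [exp_sum, ← prod_mul_distrib, Fintype.prod_sum]

variable (hw : ∀ i b, 0 ≤ w i b)
include hw

theorem productProb_mono {E F : (ι → β) → Prop} (h : ∀ ω, E ω → F ω) :
    productProb w E ≤ productProb w F := by
  refine sum_le_sum fun ω _ => ?_
  by_cases hE : E ω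
  · simp [hE, h ω hE]
  · simp only [hE, if_false]
    split_ifs
    exacts [prod_nonneg fun i _ => hw i (ω i), le_rfl]

theorem productProb_or_le (E F : (ι → β) → Prop) :
    productProb w (fun ω => E ω ∨ F ω) ≤ productProb w E + productProb w F := by
  rw [productProb, productProb, productProb, ← sum_add_distrib]
  refine sum_le_sum fun ω _ => ?_
  have := prod_nonneg fun i (_ : i ∈ univ) => hw i (ω i)
  by_cases hE : E ω <;> by_cases hF : F ω <;> simp [hE, hF, this]

theorem add_sub_one_le_productProb_and (hw₁ : ∀ i, ∑ b, w i b = 1) (E F : (ι → β) → Prop) :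
    productProb w E + productProb w F - 1 ≤ productProb w (fun ω => E ω ∧ F ω) := by
  have hsub := productProb_mono hw (F := fun ω => ¬ E ω ∨ ¬ F ω) fun ω h => not_and_or.mp h
  have hor := productProb_or_le hw (fun ω => ¬ E ω) (fun ω => ¬ F ω)
  simp only [productProb_not hw₁] at hsub hor
  linarith

theorem productProb_le_exp (hw₁ : ∀ i, ∑ b, w i b = 1) {c : ι → β → ℝ}
    (hc : ∀ i b, |c i b| ≤ 1) (hmean : ∀ i, ∑ b, w i b * c i b = 0) {ε : ℝ} (hε : 0 ≤ ε) :
    productProb w (fun ω => Fintype.card ι * ε ≤ ∑ i, c i (ω i)) ≤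
      exp (-(Fintype.card ι * ε ^ 2) / 2) := by
  set n : ℝ := (Fintype.card ι : ℝ)
  -- Chernoff: the indicator of `n ε ≤ S` is at most `exp (ε S - n ε²)`.
  have hind : ∀ ω : ι → β, (if n * ε ≤ ∑ i, c i (ω i) then ∏ i, w i (ω i) else 0) ≤
      exp (-(n * ε ^ 2)) * ((∏ i, w i (ω i)) * exp (∑ i, c i (ω i) * ε)) := by
    intro ω
    have hW := prod_nonneg fun i (_ : i ∈ univ) => hw i (ω i)
    rw [mul_left_comm, ← exp_add]
    split_ifs with h
    · refine le_mul_of_one_le_right hW (one_le_exp ?_)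
      rw [← sum_mul]
      nlinarith
    · positivity
  calc productProb w (fun ω => n * ε ≤ ∑ i, c i (ω i))
      ≤ exp (-(n * ε ^ 2)) * ∏ i, ∑ b, w i b * exp (c i b * ε) := by
        rw [← sum_prod_mul_exp_sum, mul_sum]
        exact sum_le_sum fun ω _ => hind ω
    _ ≤ exp (-(n * ε ^ 2)) * ∏ _i : ι, exp (ε ^ 2 / 2) := by
        refine mul_le_mul_of_nonneg_left (prod_le_prod (fun i _ => ?_) fun i _ => ?_)
          (exp_pos _).le
        · exact sum_nonneg fun b _ => mul_nonneg (hw i b) (exp_pos _).le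
        · exact sum_mul_exp_le_exp_sq_div_two (hw i) (hw₁ i) (hc i) (hmean i) ε
    _ = exp (-(n * ε ^ 2) / 2) := by
        rw [prod_const, card_univ, ← exp_nat_mul, ← exp_add]
        congr 1
        simp only [n]
        ring

theorem one_sub_two_mul_exp_le_productProb_abs_sum_le (hw₁ : ∀ i, ∑ b, w i b = 1)
    {c : ι → β → ℝ} (hc : ∀ i b, |c i b| ≤ 1) (hmean : ∀ i, ∑ b, w i b * c i b = 0) {ε : ℝ}
    (hε : 0 ≤ ε) :
    1 - 2 * exp (-(Fintype.card ι * ε ^ 2) / 2) ≤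
      productProb w (fun ω => |∑ i, c i (ω i)| ≤ Fintype.card ι * ε) := by
  have hupper := productProb_le_exp hw hw₁ hc hmean hε
  have hlower := productProb_le_exp hw hw₁ (c := fun i b => -c i b) (by simpa using hc)
    (by simpa using hmean) hε
  have htail := productProb_mono hw (E := fun ω => ¬ |∑ i, c i (ω i)| ≤ Fintype.card ι * ε)
    (F := fun ω => Fintype.card ι * ε ≤ ∑ i, c i (ω i) ∨ Fintype.card ι * ε ≤ ∑ i, -c i (ω i))
    fun ω h => by
      rw [sum_neg_distrib, ← le_abs]
      exact (not_le.mp h).le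
  have hor := productProb_or_le hw
    (fun ω => Fintype.card ι * ε ≤ ∑ i, c i (ω i)) (fun ω => Fintype.card ι * ε ≤ ∑ i, -c i (ω i))
  rw [productProb_not hw₁] at htail
  linarith

end ProductProb

section FlipNoise

variable {ι : Type*} {z : ι → Bool} {η0 η1 : ℝ}

/-- `flipWeight z η0 η1 a b` is the probability that the noisy attribute of sample `a` is `b`. -/
def flipWeight (z : ι → Bool) (η0 η1 : ℝ) (a : ι) (b : Bool) : ℝ :=
  if b = z a then 1 - cond (z a) η1 η0 else cond (z a) η1 η0

theorem noiseProb_eq_productProb {N : ℕ} (z : Fin N → Bool) (η0 η1 : ℝ)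
    (E : (Fin N → Bool) → Prop) : noiseProb N z η0 η1 E = productProb (flipWeight z η0 η1) E :=
  rfl

theorem flipWeight_nonneg (h0 : 0 ≤ η0) (h0' : η0 ≤ 1) (h1 : 0 ≤ η1) (h1' : η1 ≤ 1) (a : ι)
    (b : Bool) : 0 ≤ flipWeight z η0 η1 a b := by
  unfold flipWeight
  cases z a <;> cases b <;> simp <;> linarith

theorem sum_flipWeight (a : ι) : ∑ b, flipWeight z η0 η1 a b = 1 := by
  cases h : z a <;> simp [flipWeight, h]

theorem flipWeight_false (a : ι) : flipWeight z η0 η1 a false = cond (z a) η1 (1 - η0) := by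
  cases h : z a <;> simp [flipWeight, h]

end FlipNoise

section Empirical

variable {N : ℕ}

theorem empFreq_eq_sum_div (P : Fin N → Prop) :
    empFreq N P = (∑ a, if P a then 1 else 0) / N := by
  rw [empFreq, sum_boole]

theorem natCast_mul_empFreq (P : Fin N → Prop) :
    (N : ℝ) * empFreq N P = ∑ a, if P a then 1 else 0 := by
  rcases N.eq_zero_or_pos with rfl | hN
  · simp
  · rw [empFreq_eq_sum_div, mul_div_cancel₀ _ (by positivity)]

theorem empFreq_mono {P Q : Fin N → Prop} (h : ∀ a, P a → Q a) : empFreq N P ≤ empFreq N Q := by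
  unfold empFreq
  gcongr with a
  exact h a

theorem empFreq_and_false_add_empFreq_and_true (P : Fin N → Prop) (b : Fin N → Bool) :
    empFreq N (fun a => P a ∧ b a = false) + empFreq N (fun a => P a ∧ b a = true) =
      empFreq N P := by
  simp only [empFreq_eq_sum_div, ← add_div, ← sum_add_distrib]
  congr 1
  refine sum_congr rfl fun a _ => ?_
  cases b a <;> by_cases P a <;> simp [*]

end Empirical

section Denoising

variable {N : ℕ} {z : Fin N → Bool} {η0 η1 : ℝ}

/-- The expectation of `empFreq N (fun a => P a ∧ ẑ a = false)` under the flipping noise. -/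
def flipMean (z : Fin N → Bool) (η0 η1 : ℝ) (P : Fin N → Prop) : ℝ :=
  (1 - η0) * empFreq N (fun a => P a ∧ z a = false) + η1 * empFreq N (fun a => P a ∧ z a = true)

theorem natCast_mul_flipMean (P : Fin N → Prop) :
    (N : ℝ) * flipMean z η0 η1 P = ∑ a, if P a then flipWeight z η0 η1 a false else 0 := by
  simp only [flipMean, mul_add, mul_left_comm (N : ℝ), natCast_mul_empFreq, mul_sum,
    ← sum_add_distrib]
  refine sum_congr rfl fun a _ => ?_
  cases h : z a <;> by_cases P a <;> simp [flipWeight_false, *]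

theorem one_sub_two_mul_exp_le_noiseProb_abs_empFreq_sub_flipMean_le (hN : 0 < N)
    (h0 : 0 ≤ η0) (h0' : η0 ≤ 1) (h1 : 0 ≤ η1) (h1' : η1 ≤ 1) (P : Fin N → Prop) {ε : ℝ}
    (hε : 0 ≤ ε) :
    1 - 2 * exp (-(N * ε ^ 2) / 2) ≤ noiseProb N z η0 η1
      (fun zh => |empFreq N (fun a => P a ∧ zh a = false) - flipMean z η0 η1 P| ≤ ε) := by
  have hw := flipWeight_nonneg (z := z) h0 h0' h1 h1'
  have hw_le_one : ∀ a b, flipWeight z η0 η1 a b ≤ 1 := fun a b => by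
    have := sum_flipWeight (z := z) (η0 := η0) (η1 := η1) a
    cases b <;> simp only [Fintype.sum_bool] at this <;> linarith [hw a true, hw a false]
  set c : Fin N → Bool → ℝ := fun a b =>
    (if P a ∧ b = false then 1 else 0) - if P a then flipWeight z η0 η1 a false else 0
  have hc : ∀ a b, |c a b| ≤ 1 := fun a b => by
    refine abs_sub_le_of_nonneg_of_le ?_ ?_ ?_ ?_ <;> split_ifs <;> simp [hw, hw_le_one]
  have hmean : ∀ a, ∑ b, flipWeight z η0 η1 a b * c a b = 0 := fun a => by
    have := sum_flipWeight (z := z) (η0 := η0) (η1 := η1) a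
    simp only [Fintype.sum_bool] at this ⊢
    by_cases hP : P a <;> simp [c, hP]
    linear_combination (-flipWeight z η0 η1 a false) * this
  have hsum : ∀ zh : Fin N → Bool, ∑ a, c a (zh a) =
      N * (empFreq N (fun a => P a ∧ zh a = false) - flipMean z η0 η1 P) := fun zh => by
    rw [mul_sub, natCast_mul_empFreq, natCast_mul_flipMean, ← sum_sub_distrib]
    exact sum_congr rfl fun a _ => by simp only [c]; congr
  have hNpos : (0 : ℝ) < N := by exact_mod_cast hN
  have := one_sub_two_mul_exp_le_productProb_abs_sum_le hw sum_flipWeight hc hmean hε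
  rw [Fintype.card_fin] at this
  rw [noiseProb_eq_productProb]
  refine this.trans (productProb_mono hw fun zh h => ?_)
  rw [hsum, abs_mul, abs_of_pos hNpos] at h
  exact le_of_mul_le_mul_left h hNpos

end Denoising

section Debiasing

variable {N : ℕ} (η0 η1 : ℝ)

theorem empFreq_debias_false (z zh : Fin N → Bool) (P : Fin N → Prop) :
    (1 - η1) * empFreq N (fun a => P a ∧ zh a = false) -
        η1 * empFreq N (fun a => P a ∧ zh a = true) =
      (1 - η0 - η1) * empFreq N (fun a => P a ∧ z a = false) +
        (empFreq N (fun a => P a ∧ zh a = false) - flipMean z η0 η1 P) := by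
  unfold flipMean
  linear_combination (-η1) * empFreq_and_false_add_empFreq_and_true P zh +
    η1 * empFreq_and_false_add_empFreq_and_true P z

theorem empFreq_debias_true (z zh : Fin N → Bool) (P : Fin N → Prop) :
    (1 - η0) * empFreq N (fun a => P a ∧ zh a = true) -
        η0 * empFreq N (fun a => P a ∧ zh a = false) =
      (1 - η0 - η1) * empFreq N (fun a => P a ∧ z a = true) -
        (empFreq N (fun a => P a ∧ zh a = false) - flipMean z η0 η1 P) := by
  unfold flipMean
  linear_combination (1 - η0) * empFreq_and_false_add_empFreq_and_true P zh -
    (1 - η0) * empFreq_and_false_add_empFreq_and_true P z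

theorem prJoint_debias_false {X : Type} {x : Fin N → X} {f : X → Bool} (z zh : Fin N → Bool) :
    (1 - η1) * prJoint N x f zh false - η1 * prJoint N x f zh true =
      (1 - η0 - η1) * prJoint N x f z false +
        (prJoint N x f zh false - flipMean z η0 η1 fun a => f (x a) = true) :=
  empFreq_debias_false η0 η1 z zh _

theorem prJoint_debias_true {X : Type} {x : Fin N → X} {f : X → Bool} (z zh : Fin N → Bool) :
    (1 - η0) * prJoint N x f zh true - η0 * prJoint N x f zh false =
      (1 - η0 - η1) * prJoint N x f z true -
        (prJoint N x f zh false - flipMean z η0 η1 fun a => f (x a) = true) :=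
  empFreq_debias_true η0 η1 z zh _

theorem muOf_debias_false (z zh : Fin N → Bool) :
    (1 - η1) * muOf N zh false - η1 * muOf N zh true =
      (1 - η0 - η1) * muOf N z false + (muOf N zh false - flipMean z η0 η1 fun _ => True) := by
  simpa only [muOf, true_and] using empFreq_debias_false η0 η1 z zh fun _ => True

theorem muOf_debias_true (z zh : Fin N → Bool) :
    (1 - η0) * muOf N zh true - η0 * muOf N zh false =
      (1 - η0 - η1) * muOf N z true - (muOf N zh false - flipMean z η0 η1 fun _ => True) := by
  simpa only [muOf, true_and] using empFreq_debias_true η0 η1 z zh fun _ => True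

end Debiasing

section RelativeError

variable {x y X Y u : ℝ}

theorem mul_one_sub_le_of_abs_sub_le (h : |X - x| ≤ u * x) : x * (1 - u) ≤ X := by
  linarith [(abs_le.mp h).1]

theorem le_mul_one_add_of_abs_sub_le (h : |X - x| ≤ u * x) : X ≤ x * (1 + u) := by
  linarith [(abs_le.mp h).2]

theorem pos_of_abs_sub_le (hx : 0 < x) (hu : u < 1) (h : |X - x| ≤ u * x) : 0 < X :=
  (mul_pos hx (sub_pos.mpr hu)).trans_le (mul_one_sub_le_of_abs_sub_le h)

theorem div_mul_le_div_of_abs_sub_le (hx : 0 < x) (hy : 0 < y) (hu : u < 1)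
    (hX : |X - x| ≤ u * x) (hY : |Y - y| ≤ u * y) : x / y * ((1 - u) / (1 + u)) ≤ X / Y := by
  have hu0 : 0 ≤ u := nonneg_of_mul_nonneg_left ((abs_nonneg _).trans hX) hx
  rw [div_mul_div_comm]
  exact div_le_div₀ (pos_of_abs_sub_le hx hu hX).le (mul_one_sub_le_of_abs_sub_le hX)
    (pos_of_abs_sub_le hy hu hY) (le_mul_one_add_of_abs_sub_le hY)

theorem div_le_div_mul_of_abs_sub_le (hx : 0 < x) (hy : 0 < y) (hu : u < 1)
    (hX : |X - x| ≤ u * x) (hY : |Y - y| ≤ u * y) : X / Y ≤ x / y * ((1 + u) / (1 - u)) := by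
  have hu0 : 0 ≤ u := nonneg_of_mul_nonneg_left ((abs_nonneg _).trans hX) hx
  rw [div_mul_div_comm]
  exact div_le_div₀ (by positivity) (le_mul_one_add_of_abs_sub_le hX)
    (mul_pos hy (sub_pos.mpr hu)) (mul_one_sub_le_of_abs_sub_le hY)

theorem one_sub_four_mul_le_sq_div (hu : 0 ≤ u) : 1 - 4 * u ≤ ((1 - u) / (1 + u)) ^ 2 := by
  rw [div_pow, le_div_iff₀ (by positivity)]
  nlinarith [pow_nonneg hu 3]

theorem sub_le_div_div_div_of_abs_sub_le {x₀ y₀ x₁ y₁ X₀ Y₀ X₁ Y₁ τ δ : ℝ}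
    (hx₀ : 0 < x₀) (hy₀ : 0 < y₀) (hx₁ : 0 < x₁) (hy₁ : 0 < y₁) (hu0 : 0 ≤ u) (hu : u < 1)
    (hX₀ : |X₀ - x₀| ≤ u * x₀) (hY₀ : |Y₀ - y₀| ≤ u * y₀)
    (hX₁ : |X₁ - x₁| ≤ u * x₁) (hY₁ : |Y₁ - y₁| ≤ u * y₁)
    (hτ₀ : 0 ≤ τ) (hτ₁ : τ ≤ 1) (hτ : τ ≤ x₀ / y₀ / (x₁ / y₁)) (hδ : 4 * u ≤ δ) :
    τ - δ ≤ X₀ / Y₀ / (X₁ / Y₁) :=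
  calc τ - δ ≤ τ * (1 - 4 * u) := by nlinarith
    _ ≤ τ * ((1 - u) / (1 + u)) ^ 2 := by gcongr; exact one_sub_four_mul_le_sq_div hu0
    _ ≤ x₀ / y₀ / (x₁ / y₁) * ((1 - u) / (1 + u)) ^ 2 := by gcongr
    _ = x₀ / y₀ * ((1 - u) / (1 + u)) / (x₁ / y₁ * ((1 + u) / (1 - u))) := by
        have : 1 - u ≠ 0 := by linarith
        field_simp
    _ ≤ X₀ / Y₀ / (X₁ / Y₁) := by
        gcongr
        · exact (div_pos (pos_of_abs_sub_le hx₀ hu hX₀) (pos_of_abs_sub_le hy₀ hu hY₀)).le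
        · exact div_pos (pos_of_abs_sub_le hx₁ hu hX₁) (pos_of_abs_sub_le hy₁ hu hY₁)
        · exact div_mul_le_div_of_abs_sub_le hx₀ hy₀ hu hX₀ hY₀
        · exact div_le_div_mul_of_abs_sub_le hx₁ hy₁ hu hX₁ hY₁

end RelativeError


theorem min_div_max_le_div {a b : ℝ} (ha : 0 ≤ a) (hb : 0 < b) : min a b / max a b ≤ a / b :=
  div_le_div₀ ha (min_le_left a b) hb (le_max_right a b)

theorem le_rate_div_rate_of_le_gammaSR {X : Type} {N : ℕ} {x : Fin N → X} {f : X → Bool}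
    {z : Fin N → Bool} {τ : ℝ} (hfair : τ ≤ gammaSR N x f z) (h₀ : 0 < rate N x f z false)
    (h₁ : 0 < rate N x f z true) :
    τ ≤ rate N x f z false / rate N x f z true ∧ τ ≤ rate N x f z true / rate N x f z false :=
  ⟨hfair.trans (min_div_max_le_div h₀.le h₁),
    hfair.trans (by rw [gammaSR, min_comm, max_comm]; exact min_div_max_le_div h₁.le h₀)⟩

theorem satDenoised_of_abs_sub_flipMean_le {X : Type} {N : ℕ} {x : Fin N → X}
    {z zh : Fin N → Bool} {η0 η1 lam δ τ : ℝ} {f : X → Bool}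
    (h0 : 0 ≤ η0) (h1 : 0 ≤ η1) (hη : η0 + η1 < 1) (hlam : 0 < lam) (hlam₁ : lam ≤ 1)
    (hp₀ : lam ≤ prJoint N x f z false) (hp₁ : lam ≤ prJoint N x f z true)
    (hτ₀ : 0 ≤ τ) (hτ₁ : τ ≤ 1) (hfair : τ ≤ gammaSR N x f z) (hδ₀ : 0 ≤ δ) (hδ₁ : δ < 1)
    (hA : |prJoint N x f zh false - flipMean z η0 η1 (fun a => f (x a) = true)| ≤
      (1 - η0 - η1) * lam * δ / 4)
    (hM : |muOf N zh false - flipMean z η0 η1 (fun _ => True)| ≤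
      (1 - η0 - η1) * lam * δ / 4) :
    satDenoised N x η0 η1 lam δ τ f zh := by
  set c := 1 - η0 - η1
  set u := δ / 4 with hu
  set p₀ := prJoint N x f z false
  set p₁ := prJoint N x f z true
  set μ₀ := muOf N z false
  set μ₁ := muOf N z true
  set d := prJoint N x f zh false - flipMean z η0 η1 (fun a => f (x a) = true)
  set m := muOf N zh false - flipMean z η0 η1 (fun _ => True)
  have hc : 0 < c := by linarith
  have hlμ₀ : lam ≤ μ₀ := hp₀.trans (empFreq_mono fun a h => h.2)
  have hlμ₁ : lam ≤ μ₁ := hp₁.trans (empFreq_mono fun a h => h.2)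
  have hp₀pos : 0 < p₀ := hlam.trans_le hp₀
  have hp₁pos : 0 < p₁ := hlam.trans_le hp₁
  have hμ₀pos : 0 < μ₀ := hlam.trans_le hlμ₀
  have hμ₁pos : 0 < μ₁ := hlam.trans_le hlμ₁
  -- As `lam ≤ p_i ≤ μ_i`, the absolute deviation `c lam δ / 4` is a relative error `u` throughout.
  have hrel : ∀ {q e : ℝ}, lam ≤ q → |e| ≤ c * lam * δ / 4 → |e| ≤ u * (c * q) := fun hq he =>
    he.trans (by rw [hu]; linarith [mul_le_mul_of_nonneg_left hq (mul_nonneg hc.le hδ₀)])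
  have hτ :=
    le_rate_div_rate_of_le_gammaSR hfair (div_pos hp₀pos hμ₀pos) (div_pos hp₁pos hμ₁pos)
  simp only [rate] at hτ
  rw [← mul_div_mul_left p₀ μ₀ hc.ne', ← mul_div_mul_left p₁ μ₁ hc.ne'] at hτ
  have hcl : c * lam ≤ 1 := mul_le_one₀ (by linarith) hlam.le hlam₁
  have hd : |d| ≤ δ := hA.trans (by linarith [mul_le_of_le_one_left hδ₀ hcl])
  refine ⟨?_, ?_, ?_⟩
  · rw [prJoint_debias_false η0 η1 z zh]
    linarith [(abs_le.mp hd).1, mul_le_mul_of_nonneg_left hp₀ hc.le]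
  · rw [prJoint_debias_true η0 η1 z zh]
    linarith [(abs_le.mp hd).2, mul_le_mul_of_nonneg_left hp₁ hc.le]
  · unfold gammaDelta Gamma0 Gamma1
    rw [prJoint_debias_false η0 η1 z zh, prJoint_debias_true η0 η1 z zh,
      muOf_debias_false η0 η1 z zh, muOf_debias_true η0 η1 z zh]
    have hX₀ : |c * p₀ + d - c * p₀| ≤ u * (c * p₀) := by
      rw [add_sub_cancel_left]; exact hrel hp₀ hA
    have hX₁ : |c * p₁ - d - c * p₁| ≤ u * (c * p₁) := by
      rw [sub_sub_cancel_left, abs_neg]; exact hrel hp₁ hA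
    have hY₀ : |c * μ₀ + m - c * μ₀| ≤ u * (c * μ₀) := by
      rw [add_sub_cancel_left]; exact hrel hlμ₀ hM
    have hY₁ : |c * μ₁ - m - c * μ₁| ≤ u * (c * μ₁) := by
      rw [sub_sub_cancel_left, abs_neg]; exact hrel hlμ₁ hM
    have hu₀ : 0 ≤ u := by positivity
    have hu₁ : u < 1 := by linarith
    have hδu : 4 * u ≤ δ := by linarith
    have hcp₀ := mul_pos hc hp₀pos
    have hcp₁ := mul_pos hc hp₁pos
    have hcμ₀ := mul_pos hc hμ₀pos
    have hcμ₁ := mul_pos hc hμ₁pos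
    exact le_min
      (sub_le_div_div_div_of_abs_sub_le hcp₀ hcμ₀ hcp₁ hcμ₁ hu₀ hu₁ hX₀ hY₀ hX₁ hY₁ hτ₀ hτ₁ hτ.1
        hδu)
      (sub_le_div_div_div_of_abs_sub_le hcp₁ hcμ₁ hcp₀ hcμ₀ hu₀ hu₁ hX₁ hY₁ hX₀ hY₀ hτ₀ hτ₁ hτ.2
        hδu)

theorem stmt_9_general {X : Type} (N : ℕ) (hN : 1 ≤ N)
    (x : Fin N → X) (z : Fin N → Bool)
    (η0 η1 : ℝ) (hη0 : 0 < η0 ∧ η0 < 1/2) (hη1 : 0 < η1 ∧ η1 < 1/2)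
    (fstar : X → Bool)
    (lam τ δ : ℝ) (hlam : 0 < lam ∧ lam < 1/2) (hτ : 0 ≤ τ ∧ τ ≤ 1)
    (hδ : 0 < δ ∧ δ < 1/2)
    (hfair : τ ≤ gammaSR N x fstar z)
    (hmin : lam ≤ min (prJoint N x fstar z false) (prJoint N x fstar z true)) :
    1 - 2 * Real.exp (-(δ ^ 2 * N) / 6)
        - 4 * Real.exp (-((1 - η0 - η1) ^ 2 * lam ^ 2 * δ ^ 2 * N) / 2400) ≤
      noiseProb N z η0 η1 (fun zh => satDenoised N x η0 η1 lam δ τ fstar zh) := by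
  obtain ⟨hη0, hη0'⟩ := hη0
  obtain ⟨hη1, hη1'⟩ := hη1
  set ε := (1 - η0 - η1) * lam * δ / 4 with hε
  have hε0 : 0 ≤ ε := div_nonneg (mul_pos (mul_pos (by linarith) hlam.1) hδ.1).le zero_le_four
  have hw := flipWeight_nonneg (z := z) hη0.le (by linarith) hη1.le (by linarith)
  have hA := one_sub_two_mul_exp_le_noiseProb_abs_empFreq_sub_flipMean_le (z := z) hN hη0.le
    (by linarith) hη1.le (by linarith) (fun a => fstar (x a) = true) hε0
  have hM := one_sub_two_mul_exp_le_noiseProb_abs_empFreq_sub_flipMean_le (z := z) hN hη0.le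
    (by linarith) hη1.le (by linarith) (fun _ => True) hε0
  simp only [true_and] at hM
  rw [noiseProb_eq_productProb] at hA hM ⊢
  -- `N ε² / 2 = c² λ² δ² N / 32` exceeds the exponent `c² λ² δ² N / 2400` of the claim.
  have hexp : exp (-(N * ε ^ 2) / 2) ≤
      exp (-((1 - η0 - η1) ^ 2 * lam ^ 2 * δ ^ 2 * N) / 2400) := by
    rw [exp_le_exp, hε]
    nlinarith [sq_nonneg ((1 - η0 - η1) * lam * δ), (Nat.cast_nonneg N : (0 : ℝ) ≤ N)]
  calc 1 - 2 * exp (-(δ ^ 2 * N) / 6)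
        - 4 * exp (-((1 - η0 - η1) ^ 2 * lam ^ 2 * δ ^ 2 * N) / 2400)
      ≤ (1 - 2 * exp (-(N * ε ^ 2) / 2)) + (1 - 2 * exp (-(N * ε ^ 2) / 2)) - 1 := by
        linarith [exp_pos (-(δ ^ 2 * N) / 6)]
    _ ≤ productProb (flipWeight z η0 η1) (fun zh => |prJoint N x fstar zh false -
            flipMean z η0 η1 (fun a => fstar (x a) = true)| ≤ ε ∧
          |muOf N zh false - flipMean z η0 η1 (fun _ => True)| ≤ ε) :=
        (sub_le_sub_right (add_le_add hA hM) 1).trans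
          (add_sub_one_le_productProb_and hw sum_flipWeight _ _)
    _ ≤ productProb (flipWeight z η0 η1) (fun zh => satDenoised N x η0 η1 lam δ τ fstar zh) :=
        productProb_mono hw fun zh h => satDenoised_of_abs_sub_flipMean_le hη0.le hη1.le
          (by linarith) hlam.1 (by linarith) (hmin.trans (min_le_left _ _))
          (hmin.trans (min_le_right _ _)) hτ.1 hτ.2 hfair hδ.1.le (by linarith) h.1 h.2

/-- An underlying fair classifier `f★` with `γ(f★,S) ≥ τ` and
`min_i Pr_D[f★=1, Z=i] ≥ λ` satisfies the denoised constraints with parameters `(λ, δ, τ)`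
with probability at least `1 − 2·exp(−δ²N/6) − 4·exp(−(1−η0−η1)²λ²δ²N/2400)`. -/
theorem stmt_9 {X : Type} (N : ℕ) (hN : 1 ≤ N)
    (x : Fin N → X) (z : Fin N → Bool) (y : Fin N → Bool)
    (η0 η1 : ℝ) (hη0 : 0 < η0 ∧ η0 < 1/2) (hη1 : 0 < η1 ∧ η1 < 1/2)
    (hμ0 : 0 < muOf N z false) (hμ1 : 0 < muOf N z true)
    (fstar : X → Bool)
    (hwd : 0 < max (rate N x fstar z false) (rate N x fstar z true))
    (lam τ δ : ℝ) (hlam : 0 < lam ∧ lam < 1/2) (hτ : 0 ≤ τ ∧ τ ≤ 1)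
    (hδ : 0 < δ ∧ δ < 1/2)
    (hfair : τ ≤ gammaSR N x fstar z)
    (hmin : lam ≤ min (prJoint N x fstar z false) (prJoint N x fstar z true)) :
    1 - 2 * Real.exp (-(δ ^ 2 * N) / 6)
        - 4 * Real.exp (-((1 - η0 - η1) ^ 2 * lam ^ 2 * δ ^ 2 * N) / 2400) ≤
      noiseProb N z η0 η1 (fun zh => satDenoised N x η0 η1 lam δ τ fstar zh) :=
  stmt_9_general N hN x z η0 η1 hη0 hη1 fstar lam τ δ hlam hτ hδ hfair hmin
end
end
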